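/- Let G be a graph on n vertices and let X ∪ Y be a partition of its vertex set. Let b be the number of edges between X and Y and c the number of edges inside Y. Then surp(G) ≥ b²/(4n²) − c. -/

import Mathlib

open Finset

def eBetween {n : ℕ} (G : SimpleGraph (Fin n)) [DecidableRel G.Adj]
    (s t : Finset (Fin n)) : ℕ :=
  (Finset.univ.filter fun p : Fin n × Fin n => p.1 ∈ s ∧ p.2 ∈ t ∧ G.Adj p.1 p.2).card

def cutSize {n : ℕ} (G : SimpleGraph (Fin n)) [DecidableRel G.Adj] (s : Finset (Fin n)) : ℕ :=
  (Finset.univ.filter fun p : Fin n × Fin n => G.Adj p.1 p.2 ∧ p.1 ∈ s ∧ p.2 ∉ s).card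

def maxCut {n : ℕ} (G : SimpleGraph (Fin n)) [DecidableRel G.Adj] : ℕ :=
  Finset.univ.powerset.sup (cutSize G)

noncomputable def surplus {n : ℕ} (G : SimpleGraph (Fin n)) [DecidableRel G.Adj] : ℝ :=
  (maxCut G : ℝ) - (G.edgeFinset.card : ℝ) / 2

/-!
Put every vertex of `Y = Xᶜ` on one side, and each `u ∈ X` independently on the other side with
probability `1/2 + r u / (2n)`, where `r u` is the number of neighbours of `u` in `Y`. Each edge
inside `X` is then cut with probability at least `1/2 - (a u ^ 2 + a v ^ 2)` for `a = r / (2n)`,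
and each edge from `u ∈ X` to `Y` with probability `1/2 + a u`; summing, the expected cut is at
least `e(X)/2 + b/2 + ∑ r u ^ 2 / (4n) ≥ e(X)/2 + b/2 + b²/(4n²)` by Cauchy–Schwarz, as
`b = ∑ r u`. The expected cut is affine in each probability separately, so fixing the
probabilities to `0` or `1` one at a time produces an actual cut at least as large. Subtracting
`e(G)/2 = e(X)/2 + b/2 + c/2` gives `surp(G) ≥ b²/(4n²) - c/2`.
-/

open Function

section Rounding
variable {ι : Type*} [Fintype ι] [DecidableEq ι]

theorem exists_le_indicator_of_affine_update (F : (ι → ℝ) → ℝ)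
    (hF : ∀ p x θ, F (update p x θ) = (1 - θ) * F (update p x 0) + θ * F (update p x 1))
    (p : ι → ℝ) (hp : ∀ x, p x ∈ Set.Icc (0 : ℝ) 1) :
    ∃ S : Finset ι, F p ≤ F fun x => if x ∈ S then 1 else 0 := by
  suffices ∀ T : Finset ι, ∀ p : ι → ℝ, (∀ x, p x ∈ Set.Icc (0 : ℝ) 1) →
      (∀ x ∉ T, p x = 0 ∨ p x = 1) → ∃ S : Finset ι, F p ≤ F fun x => if x ∈ S then 1 else 0 from
    this univ p hp fun x hx => absurd (mem_univ x) hx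
  intro T
  induction T using Finset.induction_on with
  | empty =>
    intro p _ hp01
    refine ⟨univ.filter fun x => p x = 1, le_of_eq (congrArg F (funext fun x => ?_))⟩
    rcases hp01 x (notMem_empty x) with h | h <;> simp [h]
  | insert x T _ ih =>
    intro p hp hp01
    obtain ⟨i, hi, hle⟩ : ∃ i : ℝ, (i = 0 ∨ i = 1) ∧ F p ≤ F (update p x i) := by
      have h := hF p x (p x)
      rw [update_eq_self] at h
      obtain ⟨h0, h1⟩ := hp x
      rcases le_total (F (update p x 0)) (F (update p x 1)) with h01 | h01
      · exact ⟨1, .inr rfl, by nlinarith⟩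
      · exact ⟨0, .inl rfl, by nlinarith⟩
    have hi' : i ∈ Set.Icc (0 : ℝ) 1 := by rcases hi with rfl | rfl <;> simp
    obtain ⟨S, hS⟩ := ih (update p x i)
      (fun y => by
        rcases eq_or_ne y x with rfl | hyx
        · simpa using hi'
        · simpa [hyx] using hp y)
      (fun y hy => by
        rcases eq_or_ne y x with rfl | hyx
        · simpa using hi
        · simpa [hyx] using hp01 y (by simp [hyx, hy]))
    exact ⟨S, hle.trans hS⟩

end Rounding

theorem sq_sum_div_sq_le_sum_sq_div {ι : Type*} (s : Finset ι) (f : ι → ℝ) {N : ℝ}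
    (hN : (#s : ℝ) ≤ N) : (∑ i ∈ s, f i) ^ 2 / N ^ 2 ≤ (∑ i ∈ s, f i ^ 2) / N := by
  rcases (Nat.cast_nonneg _ |>.trans hN).eq_or_lt with rfl | hN0
  · simp
  rw [div_le_div_iff₀ (by positivity) hN0]
  have hCS := sq_sum_le_card_mul_sum_sq (s := s) (f := f)
  have : 0 ≤ ∑ i ∈ s, f i ^ 2 := sum_nonneg fun i _ => sq_nonneg (f i)
  nlinarith [mul_le_mul_of_nonneg_right hN this]

theorem sum_filter_adj_comm {V M : Type*} [AddCommMonoid M] (G : SimpleGraph V)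
    [DecidableRel G.Adj] (s : Finset V) (f : V → V → M) :
    ∑ u ∈ s, ∑ v ∈ s with G.Adj u v, f u v = ∑ u ∈ s, ∑ v ∈ s with G.Adj u v, f v u := by
  simp only [sum_filter]
  rw [sum_comm]
  simp only [G.adj_comm]

section FracCut

variable {V : Type*} [Fintype V] (G : SimpleGraph V) [DecidableRel G.Adj]

/-- The expected number of ordered pairs `(u, v)` of adjacent vertices with `u` on the first side
and `v` on the second, when each vertex `w` joins the first side independently with probability
`p w`. -/
noncomputable def fracCut (p : V → ℝ) : ℝ :=
  ∑ u, ∑ v, if G.Adj u v then p u * (1 - p v) else 0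

variable [DecidableEq V]

theorem fracCut_update (p : V → ℝ) (x : V) (θ : ℝ) :
    fracCut G (update p x θ) =
      (1 - θ) * fracCut G (update p x 0) + θ * fracCut G (update p x 1) := by
  simp only [fracCut, mul_sum, ← sum_add_distrib]
  refine sum_congr rfl fun u _ => sum_congr rfl fun v _ => ?_
  split_ifs with h
  · obtain rfl | hu := eq_or_ne u x
    · simp only [update_self, update_of_ne (G.ne_of_adj h).symm]
      ring
    · obtain rfl | hv := eq_or_ne v x
      · simp only [update_self, update_of_ne hu]
        ring
      · simp only [update_of_ne hu, update_of_ne hv]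
        ring
  · ring

theorem fracCut_biased_eq (X : Finset V) (a : V → ℝ) :
    fracCut G (fun u => if u ∈ X then 1 / 2 + a u else 0) =
      ∑ u ∈ X, (∑ v ∈ X with G.Adj u v, (1 / 2 + a u) * (1 / 2 - a v) +
        #{v ∈ Xᶜ | G.Adj u v} * (1 / 2 + a u)) := by
  rw [fracCut, ← sum_add_sum_compl X]
  rw [sum_eq_zero (s := Xᶜ) fun u hu => sum_eq_zero fun v _ => by simp [mem_compl.1 hu], add_zero]
  refine sum_congr rfl fun u hu => ?_
  rw [← sum_add_sum_compl X, sum_filter, card_filter, Nat.cast_sum, sum_mul]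
  congr 1
  · refine sum_congr rfl fun v hv => ?_
    simp only [hu, hv, if_true]
    split_ifs <;> ring
  · refine sum_congr rfl fun v hv => ?_
    rw [mem_compl] at hv
    simp [hu, hv]

theorem fracCut_biased_ge (X : Finset V) (a : V → ℝ) :
    ∑ u ∈ X, ((#{v ∈ X | G.Adj u v} : ℝ) / 4 + #{v ∈ Xᶜ | G.Adj u v} * (1 / 2 + a u) -
        Fintype.card V * a u ^ 2) ≤
      fracCut G (fun u => if u ∈ X then 1 / 2 + a u else 0) := by
  -- `(a u - a v) ^ 2 ≥ 0`, split so that the `v`-part is moved onto `u` by `hswap`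
  have hpair : ∀ u v, 1 / 4 + (a u - a u ^ 2) / 2 - (a v + a v ^ 2) / 2 ≤
      (1 / 2 + a u) * (1 / 2 - a v) := fun u v => by nlinarith [sq_nonneg (a u - a v)]
  have hswap := sum_filter_adj_comm G X fun u (_ : V) => (a u + a u ^ 2) / 2
  have hinside : ∑ u ∈ X, ((#{v ∈ X | G.Adj u v} : ℝ) / 4 - Fintype.card V * a u ^ 2) ≤
      ∑ u ∈ X, ∑ v ∈ X with G.Adj u v, (1 / 2 + a u) * (1 / 2 - a v) :=
    calc ∑ u ∈ X, ((#{v ∈ X | G.Adj u v} : ℝ) / 4 - Fintype.card V * a u ^ 2)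
        ≤ ∑ u ∈ X, ∑ v ∈ X with G.Adj u v, (1 / 4 - a u ^ 2) := by
          refine sum_le_sum fun u _ => ?_
          rw [sum_const, nsmul_eq_mul]
          have : (#{v ∈ X | G.Adj u v} : ℝ) ≤ Fintype.card V := by
            exact_mod_cast card_le_univ _
          nlinarith [sq_nonneg (a u)]
      _ = ∑ u ∈ X, ∑ v ∈ X with G.Adj u v, (1 / 4 + (a u - a u ^ 2) / 2) -
            ∑ u ∈ X, ∑ v ∈ X with G.Adj u v, (a u + a u ^ 2) / 2 := by
          rw [← sum_sub_distrib]
          refine sum_congr rfl fun u _ => ?_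
          rw [← sum_sub_distrib]
          exact sum_congr rfl fun v _ => by ring
      _ = ∑ u ∈ X, ∑ v ∈ X with G.Adj u v,
            (1 / 4 + (a u - a u ^ 2) / 2 - (a v + a v ^ 2) / 2) := by
          rw [hswap, ← sum_sub_distrib]
          exact sum_congr rfl fun u _ => (sum_sub_distrib _ _).symm
      _ ≤ _ := sum_le_sum fun u _ => sum_le_sum fun v _ => hpair u v
  rw [fracCut_biased_eq, sum_add_distrib]
  calc _ = ∑ u ∈ X, ((#{v ∈ X | G.Adj u v} : ℝ) / 4 - Fintype.card V * a u ^ 2) +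
        ∑ u ∈ X, (#{v ∈ Xᶜ | G.Adj u v} : ℝ) * (1 / 2 + a u) := by
        rw [← sum_add_distrib]
        exact sum_congr rfl fun u _ => by ring
    _ ≤ _ := add_le_add_left hinside _

end FracCut

section FinGraph

variable {n : ℕ} (G : SimpleGraph (Fin n)) [DecidableRel G.Adj]

theorem fracCut_indicator (S : Finset (Fin n)) :
    fracCut G (fun u => if u ∈ S then 1 else 0) = cutSize G S := by
  rw [cutSize, card_filter, Nat.cast_sum, Fintype.sum_prod_type]
  refine sum_congr rfl fun u _ => sum_congr rfl fun v _ => ?_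
  by_cases hu : u ∈ S <;> by_cases hv : v ∈ S <;> simp [hu, hv]

theorem eBetween_eq_sum_card (s t : Finset (Fin n)) :
    eBetween G s t = ∑ u ∈ s, #{v ∈ t | G.Adj u v} := by
  rw [eBetween, card_filter, Fintype.sum_prod_type]
  simp only [ite_and, sum_ite_irrel, sum_const_zero, sum_ite_mem, univ_inter, card_filter]

theorem eBetween_comm (s t : Finset (Fin n)) : eBetween G s t = eBetween G t s := by
  refine card_nbij' Prod.swap Prod.swap ?_ ?_ (fun _ _ => rfl) (fun _ _ => rfl)
  all_goals
    intro p hp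
    simp only [coe_filter, mem_univ, true_and] at hp ⊢
    exact ⟨hp.2.1, hp.1, hp.2.2.symm⟩

theorem two_mul_card_edgeFinset_eq_eBetween (X : Finset (Fin n)) :
    2 * #G.edgeFinset = eBetween G X X + 2 * eBetween G X Xᶜ + eBetween G Xᶜ Xᶜ := by
  have hdeg : ∀ s, eBetween G s X + eBetween G s Xᶜ = ∑ u ∈ s, G.degree u := fun s => by
    simp only [eBetween_eq_sum_card, ← sum_add_distrib, ← G.card_neighborFinset_eq_degree,
      G.neighborFinset_eq_filter, card_filter, sum_add_sum_compl]
  rw [← G.sum_degrees_eq_twice_card_edges, ← sum_add_sum_compl X, ← hdeg, ← hdeg,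
    eBetween_comm G Xᶜ X]
  ring

theorem fracCut_le_maxCut (p : Fin n → ℝ) (hp : ∀ u, p u ∈ Set.Icc (0 : ℝ) 1) :
    fracCut G p ≤ maxCut G := by
  obtain ⟨S, hS⟩ := exists_le_indicator_of_affine_update (fracCut G) (fracCut_update G) p hp
  rw [fracCut_indicator] at hS
  exact hS.trans (Nat.cast_le.2 (le_sup (mem_powerset.2 (subset_univ S))))

theorem biased_cut_le_maxCut (X : Finset (Fin n)) :
    (eBetween G X X : ℝ) / 4 + eBetween G X Xᶜ / 2 +
      (∑ u ∈ X, (#{v ∈ Xᶜ | G.Adj u v} : ℝ) ^ 2) / (4 * n) ≤ maxCut G := by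
  set r : Fin n → ℝ := fun u => #{v ∈ Xᶜ | G.Adj u v}
  have hp : ∀ u, (if u ∈ X then 1 / 2 + r u / (2 * n) else 0) ∈ Set.Icc (0 : ℝ) 1 := by
    intro u
    have hn : (0 : ℝ) < n := Nat.cast_pos.2 u.pos
    have hrn : r u ≤ n := Nat.cast_le.2 ((card_le_univ _).trans_eq (Fintype.card_fin n))
    have : r u / (2 * n) ≤ 1 / 2 := by
      rw [div_le_iff₀ (by positivity)]
      linarith
    split_ifs
    · exact ⟨by positivity, by linarith⟩
    · simp
  have hval : ∑ u ∈ X, ((#{v ∈ X | G.Adj u v} : ℝ) / 4 + r u * (1 / 2 + r u / (2 * n)) -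
      Fintype.card (Fin n) * (r u / (2 * n)) ^ 2) =
      eBetween G X X / 4 + eBetween G X Xᶜ / 2 + (∑ u ∈ X, r u ^ 2) / (4 * n) := by
    rw [eBetween_eq_sum_card, eBetween_eq_sum_card, Nat.cast_sum, Nat.cast_sum, sum_div, sum_div,
      sum_div, ← sum_add_distrib, ← sum_add_distrib]
    refine sum_congr rfl fun u _ => ?_
    have hn : (n : ℝ) ≠ 0 := (Nat.cast_pos.2 u.pos).ne'
    rw [Fintype.card_fin]
    field_simp
    ring
  rw [← hval]
  exact (fracCut_biased_ge G X fun u => r u / (2 * n)).trans (fracCut_le_maxCut G _ hp)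

end FinGraph

/-- Let `X ∪ Y` be a partition of the vertex set of `G` (with `Y = Xᶜ`), let `b` be the
number of edges between `X` and `Y`, and `c` the number of edges inside `Y` (here
`eBetween G Xᶜ Xᶜ = 2c`). Then `surp(G) ≥ b²/(4n²) − c`. -/
theorem surplus_ge_cross_edges_sq {n : ℕ} (G : SimpleGraph (Fin n))
    [DecidableRel G.Adj] (X : Finset (Fin n)) (b c : ℝ)
    (hb : b = (eBetween G X Xᶜ : ℝ))
    (hc : c = (eBetween G Xᶜ Xᶜ : ℝ) / 2) :
    b ^ 2 / (4 * (n : ℝ) ^ 2) - c ≤ surplus G := by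
  have hcut := biased_cut_le_maxCut G X
  have hCS : b ^ 2 / (4 * n ^ 2) ≤ (∑ u ∈ X, (#{v ∈ Xᶜ | G.Adj u v} : ℝ) ^ 2) / (4 * n) := by
    rw [mul_comm 4, mul_comm 4, ← div_div, ← div_div, hb, eBetween_eq_sum_card, Nat.cast_sum]
    exact div_le_div_of_nonneg_right (sq_sum_div_sq_le_sum_sq_div X _
      (Nat.cast_le.2 ((card_le_univ X).trans_eq (Fintype.card_fin n)))) zero_le_four
  have hE := congrArg (Nat.cast (R := ℝ)) (two_mul_card_edgeFinset_eq_eBetween G X)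
  push_cast at hE
  have hc0 : 0 ≤ c := hc ▸ by positivity
  rw [surplus]
  rw [← hb] at hcut hE
  linarith
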